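/- In the OV-to-Dyck-2 reduction graph D built from sets X, Y of n d-dimensional 0/1 vectors, there exist orthogonal vectors x_i ∈ X and y_j ∈ Y if and only if the pair (v_s, v_t) is Dyck-2-reachable in D, i.e. there is a directed path from v_s to v_t whose label sequence is a balanced word over the two bracket pairs ( ) and [ ]. -/

import Mathlib

/-- The four bracket symbols: `lp` = '(' , `rp` = ')' , `lb` = '[' , `rb` = ']'. -/
inductive Br where
  | lp | rp | lb | rb
deriving DecidableEq

/-- `h_x`: maps bit `0` (`false`) to '(' and bit `1` (`true`) to '['. -/
def hx (b : Bool) : Br := if b then .lb else .lp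

/-- Dyck-2 words: derivable from `S` in `S → ε | SS | (S) | [S]`. -/
inductive Dyck2 : List Br → Prop
  | nil : Dyck2 []
  | app {u v : List Br} : Dyck2 u → Dyck2 v → Dyck2 (u ++ v)
  | paren {u : List Br} : Dyck2 u → Dyck2 (Br.lp :: u ++ [Br.rp])
  | brack {u : List Br} : Dyck2 u → Dyck2 (Br.lb :: u ++ [Br.rb])

/-- Vertices of the OV reduction graph `D`; `u i j` and `w i j` are meaningful
for `1 ≤ j ≤ d - 1`. -/
inductive V6 (n : ℕ) where
  | vs | vl | vt
  | u (i : Fin n) (j : ℕ) | w (i : Fin n) (j : ℕ)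

/-- Labeled edges of `D`.  Vectors are `x y : Fin n → ℕ → Bool` with the
relevant (1-indexed) coordinates `1, …, d`. -/
inductive Edge6 {n : ℕ} (d : ℕ) (x y : Fin n → ℕ → Bool) : V6 n → Br → V6 n → Prop
  | vs_u (i : Fin n) : Edge6 d x y .vs (hx (x i 1)) (.u i 1)
  | u_u (i : Fin n) (j : ℕ) : 1 ≤ j → j ≤ d - 2 →
      Edge6 d x y (.u i j) (hx (x i (j + 1))) (.u i (j + 1))
  | u_vl (i : Fin n) : Edge6 d x y (.u i (d - 1)) (hx (x i d)) .vl
  | vl_w_rp (i : Fin n) : Edge6 d x y .vl .rp (.w i 1)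
  | vl_w_rb (i : Fin n) : y i d = false → Edge6 d x y .vl .rb (.w i 1)
  | w_w_rp (i : Fin n) (j : ℕ) : 1 ≤ j → j ≤ d - 2 →
      Edge6 d x y (.w i j) .rp (.w i (j + 1))
  | w_w_rb (i : Fin n) (j : ℕ) : 1 ≤ j → j ≤ d - 2 → y i (d - j) = false →
      Edge6 d x y (.w i j) .rb (.w i (j + 1))
  | w_vt_rp (i : Fin n) : Edge6 d x y (.w i (d - 1)) .rp .vt
  | w_vt_rb (i : Fin n) : y i 1 = false → Edge6 d x y (.w i (d - 1)) .rb .vt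

/-- Labeled directed paths. -/
inductive PathWord {V σ : Type*} (R : V → σ → V → Prop) : V → V → List σ → Prop
  | nil (v : V) : PathWord R v v []
  | cons {u v w : V} {l : σ} {ls : List σ} :
      R u l v → PathWord R v w ls → PathWord R u w (l :: ls)

namespace OV6

/-- Matching closer of an opener. -/
def clo : Br → Br
  | .lp => .rp
  | .lb => .rb
  | _ => .rp

/-- One step of the bracket-stack machine. -/
def step (st : List Br) : Br → Option (List Br)
  | .lp => some (.lp :: st)
  | .lb => some (.lb :: st)
  | .rp => match st with | .lp :: t => some t | _ => none
  | .rb => match st with | .lb :: t => some t | _ => none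

/-- Run the stack machine over a word. -/
def run : List Br → List Br → Option (List Br)
  | st, [] => some st
  | st, b :: bs =>
    match step st b with
    | some st' => run st' bs
    | none => none

lemma run_append (st : List Br) (u v : List Br) :
    run st (u ++ v) = (run st u).bind (fun st' => run st' v) := by
  induction u generalizing st with
  | nil => simp [run]
  | cons a u ih =>
    simp only [List.cons_append, run]
    cases step st a with
    | none => simp
    | some st' => simp [ih]

lemma dyck_run {w : List Br} (h : Dyck2 w) : ∀ st, run st w = some st := by
  induction h with
  | nil => intro st; rfl
  | app _ _ ih1 ih2 => intro st; rw [run_append, ih1]; exact ih2 st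
  | @paren u _ ih =>
      intro st
      have h1 : run st (Br.lp :: u ++ [Br.rp]) = run (Br.lp :: st) (u ++ [Br.rp]) := rfl
      rw [h1, run_append, ih]
      rfl
  | @brack u _ ih =>
      intro st
      have h1 : run st (Br.lb :: u ++ [Br.rb]) = run (Br.lb :: st) (u ++ [Br.rb]) := rfl
      rw [h1, run_append, ih]
      rfl

lemma run_openers (L : List Br) (hL : ∀ b ∈ L, b = .lp ∨ b = .lb) (st : List Br) :
    run st L = some (L.reverse ++ st) := by
  induction L generalizing st with
  | nil => simp [run]
  | cons a L ih =>
    have h' : ∀ b ∈ L, b = Br.lp ∨ b = Br.lb := fun b hb => hL b (by simp [hb])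
    rcases hL a (by simp) with h | h <;> subst h <;>
      simp [run, step, ih h']

lemma dyck_mirror (L : List Br) (hL : ∀ b ∈ L, b = .lp ∨ b = .lb) :
    Dyck2 (L ++ (L.map clo).reverse) := by
  induction L with
  | nil => exact Dyck2.nil
  | cons a L ih =>
    have h' := ih (fun b hb => hL b (by simp [hb]))
    rcases hL a (by simp) with h | h <;> subst h
    · have := Dyck2.paren h'
      simpa [clo, List.append_assoc] using this
    · have := Dyck2.brack h'
      simpa [clo, List.append_assoc] using this

/-- `Clo yj m cs` : `cs` is a list of closers `c_m, c_{m-1}, …, c_1`, where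
a `]` at coordinate `k` requires `yj k = false`. -/
inductive Clo (yj : ℕ → Bool) : ℕ → List Br → Prop
  | nil : Clo yj 0 []
  | rp {m cs} : Clo yj m cs → Clo yj (m + 1) (.rp :: cs)
  | rb {m cs} : yj (m + 1) = false → Clo yj m cs → Clo yj (m + 1) (.rb :: cs)

lemma clo_run {yj : ℕ → Bool} : ∀ {m cs}, Clo yj m cs → ∀ st, run st cs = some [] →
    st.length = m ∧ ∀ k b, st[k]? = some b → b = .lb → yj (m - k) = false := by
  intro m cs h
  induction h with
  | nil =>
    intro st hst
    simp only [run, Option.some_inj] at hst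
    subst hst
    simp
  | @rp m cs _ ih =>
    intro st hst
    match st with
    | [] => simp [run, step] at hst
    | .lp :: st' =>
      have hst' : run st' cs = some [] := hst
      obtain ⟨hl, hp⟩ := ih st' hst'
      refine ⟨by simp [hl], ?_⟩
      intro k b hk hb
      match k with
      | 0 =>
        simp only [List.getElem?_cons_zero, Option.some.injEq] at hk
        subst hk
        exact Br.noConfusion hb
      | k + 1 =>
        rw [List.getElem?_cons_succ] at hk
        have := hp k b hk hb
        simpa [Nat.succ_sub_succ] using this
    | .lb :: st' => simp [run, step] at hst
    | .rp :: st' => simp [run, step] at hst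
    | .rb :: st' => simp [run, step] at hst
  | @rb m cs hy _ ih =>
    intro st hst
    match st with
    | [] => simp [run, step] at hst
    | .lb :: st' =>
      have hst' : run st' cs = some [] := hst
      obtain ⟨hl, hp⟩ := ih st' hst'
      refine ⟨by simp [hl], ?_⟩
      intro k b hk hb
      match k with
      | 0 => simpa using hy
      | k + 1 =>
        rw [List.getElem?_cons_succ] at hk
        have := hp k b hk hb
        simpa [Nat.succ_sub_succ] using this
    | .lp :: st' => simp [run, step] at hst
    | .rp :: st' => simp [run, step] at hst
    | .rb :: st' => simp [run, step] at hst

lemma pathword_append {V σ : Type*} {R : V → σ → V → Prop} {a b c : V} {w1 w2 : List σ}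
    (h1 : PathWord R a b w1) (h2 : PathWord R b c w2) : PathWord R a c (w1 ++ w2) := by
  induction h1 with
  | nil => exact h2
  | cons e _ ih => exact PathWord.cons e (ih h2)

section Graph

variable {n : ℕ} {d : ℕ} {x y : Fin n → ℕ → Bool}

lemma pw_vt {v : V6 n} {ws : List Br} (h : PathWord (Edge6 d x y) .vt v ws) :
    v = .vt ∧ ws = [] := by
  cases h with
  | nil => exact ⟨rfl, rfl⟩
  | cons e _ => cases e

lemma pw_w (hd : 2 ≤ d) (j : Fin n) :
    ∀ (ws : List Br) (k : ℕ), 1 ≤ k → k ≤ d - 1 →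
      PathWord (Edge6 d x y) (.w j k) .vt ws → Clo (y j) (d - k) ws := by
  intro ws
  induction ws with
  | nil => intro k _ _ h; cases h
  | cons l ls ih =>
    intro k hk1 hk2 h
    cases h with
    | cons e hp =>
      cases e with
      | w_w_rp _ _ h1 h2 =>
        have hc := ih (k + 1) (by omega) (by omega) hp
        have he : d - k = (d - (k + 1)) + 1 := by omega
        rw [he]
        exact Clo.rp hc
      | w_w_rb _ _ h1 h2 hy =>
        have hc := ih (k + 1) (by omega) (by omega) hp
        have he : d - k = (d - (k + 1)) + 1 := by omega
        rw [he]
        exact Clo.rb (he ▸ hy) hc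
      | w_vt_rp =>
        obtain ⟨-, rfl⟩ := pw_vt hp
        have he : d - (d - 1) = 1 := by omega
        rw [he]
        exact Clo.rp Clo.nil
      | w_vt_rb _ hy =>
        obtain ⟨-, rfl⟩ := pw_vt hp
        have he : d - (d - 1) = 1 := by omega
        rw [he]
        exact Clo.rb (by simpa using hy) Clo.nil

lemma pw_vl (hd : 2 ≤ d) {ws : List Br} (h : PathWord (Edge6 d x y) .vl .vt ws) :
    ∃ j : Fin n, Clo (y j) d ws := by
  cases h with
  | cons e hp =>
    cases e with
    | vl_w_rp j =>
      have hc := pw_w hd j _ 1 le_rfl (by omega) hp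
      refine ⟨j, ?_⟩
      have h1 := Clo.rp hc
      rwa [Nat.sub_add_cancel (by omega : 1 ≤ d)] at h1
    | vl_w_rb j hy =>
      have hc := pw_w hd j _ 1 le_rfl (by omega) hp
      refine ⟨j, ?_⟩
      have h1 := Clo.rb (by rwa [Nat.sub_add_cancel (by omega : 1 ≤ d)]) hc
      rwa [Nat.sub_add_cancel (by omega : 1 ≤ d)] at h1

lemma pw_u (hd : 2 ≤ d) (i : Fin n) :
    ∀ (ws : List Br) (k : ℕ), 1 ≤ k → k ≤ d - 1 →
      PathWord (Edge6 d x y) (.u i k) .vt ws →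
      ∃ ws', ws = ((List.range' (k + 1) (d - k)).map fun m => hx (x i m)) ++ ws'
        ∧ PathWord (Edge6 d x y) .vl .vt ws' := by
  intro ws
  induction ws with
  | nil => intro k _ _ h; cases h
  | cons l ls ih =>
    intro k hk1 hk2 h
    cases h with
    | cons e hp =>
      cases e with
      | u_u _ _ h1 h2 =>
        obtain ⟨ws', rfl, hw⟩ := ih (k + 1) (by omega) (by omega) hp
        refine ⟨ws', ?_, hw⟩
        have he : d - k = (d - (k + 1)) + 1 := by omega
        rw [he, List.range'_succ]
        simp
      | u_vl =>
        refine ⟨ls, ?_, hp⟩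
        have h1 : d - (d - 1) = 1 := by omega
        have h2 : d - 1 + 1 = d := by omega
        rw [h1, h2, List.range'_one]
        simp

lemma chain_u (hd : 2 ≤ d) (i : Fin n) :
    ∀ t, t ≤ d - 2 → PathWord (Edge6 d x y) (.u i (d - 1 - t)) .vl
      ((List.range' (d - t) (t + 1)).map fun m => hx (x i m)) := by
  intro t
  induction t with
  | zero =>
    intro _
    simp only [Nat.sub_zero, List.range'_one, List.map_cons, List.map_nil]
    exact PathWord.cons (Edge6.u_vl i) (PathWord.nil _)
  | succ t ih =>
    intro ht
    have hpt := ih (by omega)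
    have ha1 : 1 ≤ d - 1 - (t + 1) := by omega
    have ha2 : d - 1 - (t + 1) ≤ d - 2 := by omega
    have e3 : d - (t + 1) = d - 1 - (t + 1) + 1 := by omega
    have e4 : d - (t + 1) + 1 = d - t := by omega
    have e5 : d - (t + 1) = d - 1 - t := by omega
    rw [List.range'_succ, List.map_cons]
    refine PathWord.cons (v := V6.u i (d - (t + 1))) ?_ ?_
    · have he := Edge6.u_u (d := d) (x := x) (y := y) i (d - 1 - (t + 1)) ha1 ha2
      rw [← e3] at he
      exact he
    · rw [e4, e5]
      exact hpt

lemma chain_w (hd : 2 ≤ d) (i j : Fin n)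
    (hortho : ∀ m, 1 ≤ m → m ≤ d → (x i m && y j m) = false) :
    ∀ t, t ≤ d - 2 → PathWord (Edge6 d x y) (.w j (d - 1 - t)) .vt
      (((List.range' 1 (t + 1)).reverse).map fun m => clo (hx (x i m))) := by
  intro t
  induction t with
  | zero =>
    intro _
    simp only [Nat.sub_zero, List.range'_one, List.reverse_cons, List.reverse_nil,
      List.nil_append, List.map_cons, List.map_nil]
    show PathWord (Edge6 d x y) (V6.w j (d - 1)) V6.vt [clo (hx (x i 1))]
    cases hxm : x i 1 with
    | false =>
      exact PathWord.cons (Edge6.w_vt_rp j) (PathWord.nil _)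
    | true =>
      have hy : y j 1 = false := by
        have := hortho 1 le_rfl (by omega)
        rwa [hxm, Bool.true_and] at this
      exact PathWord.cons (Edge6.w_vt_rb j hy) (PathWord.nil _)
  | succ t ih =>
    intro ht
    have hpt := ih (by omega)
    have ha1 : 1 ≤ d - 1 - (t + 1) := by omega
    have ha2 : d - 1 - (t + 1) ≤ d - 2 := by omega
    have e2 : d - 1 - (t + 1) + 1 = d - 1 - t := by omega
    have e6 : d - (d - 1 - (t + 1)) = t + 2 := by omega
    have e7 : 1 + 1 * (t + 1) = t + 2 := by omega
    rw [List.range'_concat, List.reverse_append, List.reverse_cons, List.reverse_nil,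
      List.nil_append, List.singleton_append, List.map_cons, e7]
    refine PathWord.cons ?_ hpt
    show Edge6 d x y (V6.w j (d - 1 - (t + 1))) (clo (hx (x i (t + 2)))) (V6.w j (d - 1 - t))
    cases hxm : x i (t + 2) with
    | false =>
      have he := Edge6.w_w_rp (d := d) (x := x) (y := y) j (d - 1 - (t + 1)) ha1 ha2
      rw [e2] at he
      exact he
    | true =>
      have hy : y j (t + 2) = false := by
        have := hortho (t + 2) (by omega) (by omega)
        rwa [hxm, Bool.true_and] at this
      have he := Edge6.w_w_rb (d := d) (x := x) (y := y) j (d - 1 - (t + 1)) ha1 ha2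
        (by rwa [e6])
      rw [e2] at he
      exact he

end Graph

end OV6

/-- there exist orthogonal vectors `x i ∈ X`, `y j ∈ Y` iff
`(v_s, v_t)` is Dyck-2-reachable in the reduction graph `D`. -/
theorem stmt_6 (n d : ℕ) (hd : 2 ≤ d) (x y : Fin n → ℕ → Bool) :
    (∃ i j : Fin n, ∀ m, 1 ≤ m → m ≤ d → (x i m && y j m) = false) ↔
      (∃ ws : List Br, PathWord (Edge6 d x y) .vs .vt ws ∧ Dyck2 ws) := by
  constructor
  · rintro ⟨i, j, hortho⟩
    refine ⟨((List.range' 1 d).map fun m => hx (x i m)) ++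
      (((List.range' 1 d).reverse).map fun m => OV6.clo (hx (x i m))), ?_, ?_⟩
    · refine OV6.pathword_append (b := V6.vl) ?_ ?_
      · have hsplit : List.range' 1 d = 1 :: List.range' 2 (d - 1) := by
          obtain ⟨e, rfl⟩ : ∃ e, d = e + 1 := ⟨d - 1, by omega⟩
          simp [List.range'_succ]
        rw [hsplit, List.map_cons]
        refine PathWord.cons (Edge6.vs_u i) ?_
        have hc := OV6.chain_u (x := x) (y := y) hd i (d - 2) le_rfl
        have e1 : d - 1 - (d - 2) = 1 := by omega
        have e2 : d - (d - 2) = 2 := by omega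
        have e3 : d - 2 + 1 = d - 1 := by omega
        rw [e1, e2, e3] at hc
        exact hc
      · have hsplit2 : (List.range' 1 d).reverse = d :: (List.range' 1 (d - 1)).reverse := by
          obtain ⟨e, rfl⟩ : ∃ e, d = e + 1 := ⟨d - 1, by omega⟩
          have h1e : 1 + 1 * e = e + 1 := by omega
          rw [List.range'_concat, h1e]
          simp
        rw [hsplit2, List.map_cons]
        refine PathWord.cons (v := V6.w j 1) ?_ ?_
        · show Edge6 d x y V6.vl (OV6.clo (hx (x i d))) (V6.w j 1)
          cases hxd : x i d with
          | false => exact Edge6.vl_w_rp j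
          | true =>
            have hy : y j d = false := by
              have := hortho d (by omega) le_rfl
              rwa [hxd, Bool.true_and] at this
            exact Edge6.vl_w_rb j hy
        · have hc := OV6.chain_w (x := x) (y := y) hd i j hortho (d - 2) le_rfl
          have e1 : d - 1 - (d - 2) = 1 := by omega
          have e3 : d - 2 + 1 = d - 1 := by omega
          rw [e1, e3] at hc
          exact hc
    · have hL : ∀ b ∈ (List.range' 1 d).map fun m => hx (x i m), b = Br.lp ∨ b = Br.lb := by
        intro b hb
        simp only [List.mem_map] at hb
        obtain ⟨m, -, rfl⟩ := hb
        cases x i m <;> simp [hx]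
      have hdm := OV6.dyck_mirror _ hL
      have heq : ((((List.range' 1 d).map fun m => hx (x i m)).map OV6.clo).reverse)
          = ((List.range' 1 d).reverse).map fun m => OV6.clo (hx (x i m)) := by
        rw [List.map_map, ← List.map_reverse]
        rfl
      rw [heq] at hdm
      exact hdm
  · rintro ⟨ws, hpath, hdyck⟩
    cases hpath with
    | cons e hp =>
      cases e with
      | vs_u i =>
        obtain ⟨ws', hws, hvl⟩ := OV6.pw_u hd i _ 1 le_rfl (by omega) hp
        obtain ⟨j, hclo⟩ := OV6.pw_vl hd hvl
        refine ⟨i, j, ?_⟩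
        rw [show (1 : ℕ) + 1 = 2 from rfl] at hws
        subst hws
        have hsplit : List.range' 1 d = 1 :: List.range' 2 (d - 1) := by
          obtain ⟨e, rfl⟩ : ∃ e, d = e + 1 := ⟨d - 1, by omega⟩
          simp [List.range'_succ]
        set L := (List.range' 1 d).map fun m => hx (x i m) with hLdef
        have hL : ∀ b ∈ L, b = Br.lp ∨ b = Br.lb := by
          intro b hb
          rw [hLdef] at hb
          simp only [List.mem_map] at hb
          obtain ⟨m, -, rfl⟩ := hb
          cases x i m <;> simp [hx]
        have hfull : hx (x i 1) :: (((List.range' 2 (d - 1)).map fun m => hx (x i m)) ++ ws')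
            = L ++ ws' := by
          rw [hLdef, hsplit, List.map_cons, List.cons_append]
        have hrun : OV6.run [] (L ++ ws') = some [] := by
          rw [← hfull]; exact OV6.dyck_run hdyck []
        rw [OV6.run_append, OV6.run_openers L hL [], Option.bind_some,
          List.append_nil] at hrun
        obtain ⟨hlen, hprop⟩ := OV6.clo_run hclo L.reverse hrun
        intro m hm1 hm2
        cases hxm : x i m with
        | false => simp [hxm]
        | true =>
          have hLlen : L.length = d := by simp [hLdef]
          have hget : L.reverse[d - m]? = some Br.lb := by
            rw [List.getElem?_reverse (by rw [hLlen]; omega), hLlen]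
            have em : d - 1 - (d - m) = m - 1 := by omega
            rw [em, hLdef, List.getElem?_map,
              List.getElem?_range' (s := 1) (step := 1) (show m - 1 < d by omega)]
            have em2 : 1 + 1 * (m - 1) = m := by omega
            rw [em2]
            simp [hx, hxm]
          have hym := hprop (d - m) Br.lb hget rfl
          have em3 : d - (d - m) = m := by omega
          rw [em3] at hym
          simp [hxm, hym]
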